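/- arXiv:2207.09340 — 5 statements merged into one kernel-verified Lean document; each statement's English description precedes it below -/
import Mathlib

section
/- Let U ∈ ℂ^{n×n} be a unitary matrix and let T ⊆ ℂ^n be any k-dimensional complex linear subspace (1 ≤ k ≤ n). Then the coherence of T with respect to ‖·‖_U satisfies sup{ ‖Uv‖_∞ : v ∈ T, ‖v‖₂ = 1 } ≥ √(k/n). -/
/-!
Let `P` be the orthogonal projection onto `T` and `uᵢ` the conjugated rows of `U`, so that
`(U x)ᵢ = ⟪uᵢ, x⟫`. As `U` is an isometry, the `uᵢ` satisfy Parseval's identity on `T`, whence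
`∑ᵢ ‖P uᵢ‖² = dim T = k`. The unit vector `P uᵢ / ‖P uᵢ‖ ∈ T` has `i`-th coordinate `‖P uᵢ‖`
under `U`, so each `‖P uᵢ‖` is at most the coherence `c`, and therefore `k ≤ n c²`.
-/

open scoped Matrix

/-- The Euclidean (ℓ²) norm of a finite complex vector. -/
noncomputable def l2C {n : ℕ} (x : Fin n → ℂ) : ℝ := Real.sqrt (∑ i, ‖x i‖ ^ 2)

/-- The ℓ^∞ norm of a finite complex vector. -/
noncomputable def linfC {n : ℕ} (x : Fin n → ℂ) : ℝ := ⨆ i, ‖x i‖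

open scoped InnerProductSpace

section
variable {𝕜 E : Type*} [RCLike 𝕜] [NormedAddCommGroup E] [InnerProductSpace 𝕜 E]

theorem Submodule.exists_norm_eq_one_inner_eq_norm_starProjection (K : Submodule 𝕜 E)
    [K.HasOrthogonalProjection] {x : E} (hx : K.starProjection x ≠ 0) :
    ∃ v ∈ K, ‖v‖ = 1 ∧ ⟪x, v⟫_𝕜 = ‖K.starProjection x‖ := by
  set p := K.starProjection x
  have hp : ‖p‖ ≠ 0 := norm_ne_zero_iff.mpr hx
  have hxp : ⟪x, p⟫_𝕜 = ⟪p, p⟫_𝕜 := by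
    rw [← sub_eq_zero, ← inner_sub_left]
    exact K.starProjection_inner_eq_zero x p (K.starProjection_apply_mem x)
  refine ⟨(‖p‖⁻¹ : 𝕜) • p, K.smul_mem _ (K.starProjection_apply_mem x), ?_, ?_⟩
  · rw [norm_smul, norm_inv, RCLike.norm_ofReal, abs_norm, inv_mul_cancel₀ hp]
  · rw [inner_smul_right, hxp, inner_self_eq_norm_sq_to_K]
    field_simp

theorem Submodule.sum_norm_sq_starProjection_eq_finrank {ι : Type*} [Fintype ι]
    (K : Submodule 𝕜 E) [FiniteDimensional 𝕜 K] (u : ι → E)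
    (hu : ∀ e ∈ K, ∑ i, ‖⟪u i, e⟫_𝕜‖ ^ 2 = ‖e‖ ^ 2) :
    ∑ i, ‖K.starProjection (u i)‖ ^ 2 = Module.finrank 𝕜 K := by
  let b := stdOrthonormalBasis 𝕜 K
  have hproj (x : E) : ‖K.starProjection x‖ ^ 2 = ∑ j, ‖⟪(b j : E), x⟫_𝕜‖ ^ 2 := by
    rw [K.starProjection_apply, Submodule.norm_coe, ← b.sum_sq_norm_inner_right]
    simp only [Submodule.inner_orthogonalProjectionOnto_eq_of_mem_left]
  calc ∑ i, ‖K.starProjection (u i)‖ ^ 2 = ∑ j, ∑ i, ‖⟪u i, (b j : E)⟫_𝕜‖ ^ 2 := by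
        simp_rw [hproj, norm_inner_symm (b _ : E)]
        exact Finset.sum_comm
    _ = ∑ j, ‖b j‖ ^ 2 := by simp_rw [hu _ (b _).2, Submodule.norm_coe]
    _ = Module.finrank 𝕜 K := by simp [b.norm_eq_one]

end

theorem Real.sqrt_sum_sq_div_card_le {ι : Type*} [Fintype ι] {a : ι → ℝ} {c : ℝ} (hc : 0 ≤ c)
    (ha : ∀ i, |a i| ≤ c) : √((∑ i, a i ^ 2) / Fintype.card ι) ≤ c := by
  rw [Real.sqrt_le_left hc]
  refine div_le_of_le_mul₀ (Nat.cast_nonneg _) (sq_nonneg c) ?_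
  calc ∑ i, a i ^ 2 ≤ ∑ _i : ι, c ^ 2 :=
        Finset.sum_le_sum fun i _ => sq_le_sq' (abs_le.mp (ha i)).1 (abs_le.mp (ha i)).2
    _ = c ^ 2 * Fintype.card ι := by simp [mul_comm]

section
variable {𝕜 m n : Type*} [RCLike 𝕜] [Fintype n]

theorem Matrix.norm_toLp_mulVec_of_conjTranspose_mul_self [Fintype m] [DecidableEq n]
    {U : Matrix m n 𝕜} (hU : Uᴴ * U = 1) (x : n → 𝕜) : ‖WithLp.toLp 2 (U *ᵥ x)‖ = ‖WithLp.toLp 2 x‖ := by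
  simp only [@norm_eq_sqrt_re_inner 𝕜, EuclideanSpace.inner_toLp_toLp]
  rw [Matrix.star_mulVec, dotProduct_comm, Matrix.dotProduct_mulVec, Matrix.vecMul_vecMul, hU,
    Matrix.vecMul_one, dotProduct_comm]

def Matrix.conjRow (U : Matrix m n 𝕜) (i : m) : EuclideanSpace 𝕜 n := WithLp.toLp 2 (star (U i))

theorem Matrix.inner_conjRow (U : Matrix m n 𝕜) (i : m) (x : EuclideanSpace 𝕜 n) :
    ⟪U.conjRow i, x⟫_𝕜 = (U *ᵥ x.ofLp) i := by
  simp [Matrix.conjRow, EuclideanSpace.inner_eq_star_dotProduct, Matrix.mulVec, dotProduct_comm]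

theorem Matrix.sum_norm_sq_inner_conjRow [Fintype m] [DecidableEq n] {U : Matrix m n 𝕜}
    (hU : Uᴴ * U = 1) (x : EuclideanSpace 𝕜 n) : ∑ i, ‖⟪U.conjRow i, x⟫_𝕜‖ ^ 2 = ‖x‖ ^ 2 := by
  simp_rw [U.inner_conjRow]
  calc ∑ i, ‖(U *ᵥ x.ofLp) i‖ ^ 2 = ‖WithLp.toLp 2 (U *ᵥ x.ofLp)‖ ^ 2 := by
        rw [EuclideanSpace.norm_sq_eq, WithLp.ofLp_toLp]
    _ = ‖x‖ ^ 2 := by rw [U.norm_toLp_mulVec_of_conjTranspose_mul_self hU, WithLp.toLp_ofLp]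

end

theorem l2C_eq_norm_toLp {n : ℕ} (x : Fin n → ℂ) : l2C x = ‖WithLp.toLp 2 x‖ :=
  (EuclideanSpace.norm_eq _).symm

theorem norm_le_linfC {n : ℕ} (x : Fin n → ℂ) (i : Fin n) : ‖x i‖ ≤ linfC x :=
  le_ciSup (f := fun i => ‖x i‖) (Set.finite_range _).bddAbove i

theorem linfC_nonneg {n : ℕ} (x : Fin n → ℂ) : 0 ≤ linfC x :=
  Real.iSup_nonneg fun _ => norm_nonneg _

theorem linfC_le_l2C {n : ℕ} (x : Fin n → ℂ) : linfC x ≤ l2C x :=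
  Real.iSup_le (fun i => by simpa [l2C_eq_norm_toLp] using PiLp.norm_apply_le (WithLp.toLp 2 x) i)
    (Real.sqrt_nonneg _)

theorem l2C_mulVec_of_conjTranspose_mul_self {n : ℕ} {U : Matrix (Fin n) (Fin n) ℂ}
    (hU : Uᴴ * U = 1) (x : Fin n → ℂ) : l2C (U *ᵥ x) = l2C x := by
  rw [l2C_eq_norm_toLp, l2C_eq_norm_toLp, U.norm_toLp_mulVec_of_conjTranspose_mul_self hU]

theorem bddAbove_range_linfC_mulVec {n : ℕ} {U : Matrix (Fin n) (Fin n) ℂ} (hU : Uᴴ * U = 1)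
    (T : Submodule ℂ (Fin n → ℂ)) :
    BddAbove (Set.range fun v : {v : Fin n → ℂ // v ∈ T ∧ l2C v = 1} => linfC (U *ᵥ v.1)) := by
  refine ⟨1, ?_⟩
  rintro _ ⟨⟨v, -, hv⟩, rfl⟩
  exact (linfC_le_l2C _).trans (l2C_mulVec_of_conjTranspose_mul_self hU v ▸ hv).le

theorem coherence_lower_bound_general (n k : ℕ)
    (U : Matrix (Fin n) (Fin n) ℂ) (hU : Uᴴ * U = 1)
    (T : Submodule ℂ (Fin n → ℂ)) (hT : Module.finrank ℂ T = k) :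
    Real.sqrt ((k : ℝ) / n) ≤
      ⨆ v : {v : Fin n → ℂ // v ∈ T ∧ l2C v = 1}, linfC (U.mulVec v.1) := by
  set c := ⨆ v : {v : Fin n → ℂ // v ∈ T ∧ l2C v = 1}, linfC (U.mulVec v.1)
  have hc : 0 ≤ c := Real.iSup_nonneg fun _ => linfC_nonneg _
  let T' := T.map (WithLp.linearEquiv 2 ℂ (Fin n → ℂ)).symm.toLinearMap
  have hsum : ∑ i, ‖T'.starProjection (U.conjRow i)‖ ^ 2 = k := by
    rw [T'.sum_norm_sq_starProjection_eq_finrank _ fun e _ => U.sum_norm_sq_inner_conjRow hU e,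
      LinearEquiv.finrank_map_eq, hT]
  have hle (i : Fin n) : ‖T'.starProjection (U.conjRow i)‖ ≤ c := by
    by_cases h : T'.starProjection (U.conjRow i) = 0
    · simpa [h] using hc
    obtain ⟨v, hvT, hv, hinner⟩ := T'.exists_norm_eq_one_inner_eq_norm_starProjection h
    calc ‖T'.starProjection (U.conjRow i)‖ = ‖(U *ᵥ v.ofLp) i‖ := by
          rw [← U.inner_conjRow, hinner, RCLike.norm_ofReal, abs_norm]
      _ ≤ linfC (U *ᵥ v.ofLp) := norm_le_linfC _ i
      _ ≤ c := le_ciSup (bddAbove_range_linfC_mulVec hU T)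
          ⟨v.ofLp, T.mem_map_equiv.mp hvT, by rw [l2C_eq_norm_toLp, WithLp.toLp_ofLp, hv]⟩
  simpa [hsum] using Real.sqrt_sum_sq_div_card_le hc fun i => (abs_norm _).trans_le (hle i)

/-- for a unitary `U ∈ ℂ^{n×n}` and any `k`-dimensional complex subspace
`T ⊆ ℂ^n` (with `1 ≤ k ≤ n`), the coherence of `T` with respect to `‖·‖_U`, i.e.
`sup { ‖Uv‖_∞ : v ∈ T, ‖v‖₂ = 1 }`, is at least `√(k/n)`. -/
theorem coherence_lower_bound (n k : ℕ) (hk : 1 ≤ k) (hkn : k ≤ n)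
    (U : Matrix (Fin n) (Fin n) ℂ) (hU : Uᴴ * U = 1)
    (T : Submodule ℂ (Fin n → ℂ)) (hT : Module.finrank ℂ T = k) :
    Real.sqrt ((k : ℝ) / n) ≤
      ⨆ v : {v : Fin n → ℂ // v ∈ T ∧ l2C v = 1}, linfC (U.mulVec v.1) :=
  coherence_lower_bound_general n k U hU T hT
end

section
/- Let G : ℝ^k → ℝ^n be a (k,d,n)-generative ReLU network with layer widths k = k_0 ≤ k_1,…,k_d, k_d = n. Then range(G) is a union of at most N polyhedral cones, each contained in a linear subspace of dimension at most k, where N := Π_{ℓ=1}^{d−1} 2^k·(e·k_ℓ/k)^k = (2e·k̄/k)^{k(d−1)} with k̄ := (Π_{ℓ=1}^{d−1} k_ℓ)^{1/(d−1)} the geometric mean of the hidden layer widths. In particular log N ≤ k·Σ_{i=1}^{d−1} log(2e·k_i/k). -/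
/-- The hidden layers of a ReLU network: `hid k W j z = σ(W^{(j)} ⋯ σ(W^{(1)} z))`,
where `σ = max(·,0)` acts entrywise. -/
noncomputable def hid (k : ℕ → ℕ) (W : ∀ i : ℕ, Matrix (Fin (k (i + 1))) (Fin (k i)) ℝ) :
    (j : ℕ) → (Fin (k 0) → ℝ) → Fin (k j) → ℝ
  | 0, z => z
  | (j + 1), z => fun t => max (Matrix.mulVec (W j) (hid k W j z) t) 0

/-- A `(k 0, d+1, k (d+1))`-generative ReLU network:
`genNet k W d z = W^{(d+1)} σ(W^{(d)} ⋯ σ(W^{(1)} z))` (so the paper's depth is `d+1`,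
with hidden widths `k 1, …, k d` and output width `k (d+1)`). -/
noncomputable def genNet (k : ℕ → ℕ) (W : ∀ i : ℕ, Matrix (Fin (k (i + 1))) (Fin (k i)) ℝ)
    (d : ℕ) (z : Fin (k 0) → ℝ) : Fin (k (d + 1)) → ℝ :=
  Matrix.mulVec (W d) (hid k W d z)

/-- A polyhedral cone: the set of conic (nonnegative) combinations of finitely many vectors. -/
def IsPolyhedralCone {n : ℕ} (C : Set (Fin n → ℝ)) : Prop :=
  ∃ (N : ℕ) (v : Fin N → Fin n → ℝ),
    C = {x | ∃ c : Fin N → ℝ, (∀ i, 0 ≤ c i) ∧ x = ∑ i, c i • v i}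

/-!
Fix the sign pattern of every hidden layer. On the set of inputs with that pattern, an
intersection of finitely many halfspaces through `0`, the network is a linear map, so it maps
this H-cone onto a cone of dimension at most `k`; the cone is polyhedral because H-cones are
finitely generated (Fourier–Motzkin elimination) and linear images of finitely generated cones
are finitely generated. A layer of width `m` cuts each cone of the previous layer further along
the sign patterns of `m` linear forms on `ℝ^k`; these patterns have VC dimension at most `k`,
so by Sauer–Shelah there are at most `∑_{j ≤ k} C(m, j) ≤ (e m / k)^k` of them.
-/

open Finset

namespace LinearMap

variable {R V : Type*} [CommRing R] [AddCommGroup V] [Module R V]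

def fourierMotzkin (f : V →ₗ[R] R) : V →ₗ[R] V →ₗ[R] V :=
  mk₂ R (fun y z => f y • z - f z • y)
    (fun _ _ _ => by simp only [map_add, add_smul, smul_add]; abel)
    (fun c _ z => by simp only [map_smul, smul_eq_mul, mul_smul, smul_sub, smul_comm c (f z)])
    (fun _ _ _ => by simp only [map_add, add_smul, smul_add]; abel)
    (fun c y _ => by simp only [map_smul, smul_eq_mul, mul_smul, smul_sub, smul_comm (f y) c])

@[simp] lemma fourierMotzkin_apply (f : V →ₗ[R] R) (y z : V) :
    f.fourierMotzkin y z = f y • z - f z • y := rfl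

end LinearMap

namespace PointedCone

variable {𝕜 V : Type*} [Field 𝕜] [LinearOrder 𝕜] [IsStrictOrderedRing 𝕜]
  [AddCommGroup V] [Module 𝕜 V]

lemma eq_zero_of_mem_hull_of_forall_neg {s : Set V} {f : V →ₗ[𝕜] 𝕜} (hs : ∀ v ∈ s, f v < 0)
    {z : V} (hz : z ∈ hull 𝕜 s) (hfz : 0 ≤ f z) : z = 0 := by
  suffices z = 0 ∨ f z < 0 from this.resolve_right hfz.not_gt
  clear hfz
  induction hz using Submodule.span_induction with
  | mem v hv => exact .inr (hs v hv)
  | zero => exact .inl rfl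
  | add x y _ _ hx hy =>
    rcases hx with rfl | hx
    · simpa using hy
    rcases hy with rfl | hy
    · simpa using Or.inr hx
    exact .inr (by rw [map_add]; linarith)
  | smul a x _ hx =>
    rcases hx with rfl | hx
    · simp
    rcases a.2.eq_or_lt with ha | ha
    · left; rw [← Nonneg.coe_smul, ← ha, zero_smul]
    · right; rw [← Nonneg.coe_smul, map_smul, smul_eq_mul]; exact mul_neg_of_pos_of_neg ha hx

lemma hull_le_dual_singleton {s : Set V} {f : V →ₗ[𝕜] 𝕜} (hs : ∀ v ∈ s, 0 ≤ f v) :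
    hull 𝕜 s ≤ dual .id {f} :=
  Submodule.span_le.2 fun v hv => by simpa using hs v hv

lemma fourierMotzkin_mem_hull_image2 (f : V →ₗ[𝕜] 𝕜) {s t : Set V} {y z : V}
    (hy : y ∈ hull 𝕜 s) (hz : z ∈ hull 𝕜 t) :
    f.fourierMotzkin y z ∈ hull 𝕜 (Set.image2 (f.fourierMotzkin · ·) s t) :=
  (Submodule.map₂_span_span _ (f.fourierMotzkin.restrictScalars₁₂ _ _) s t).le
    (Submodule.apply_mem_map₂ _ hy hz)

/-- Fourier–Motzkin elimination: a point `y + z` with `y` in the cone over `P ⊆ {0 ≤ f}`,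
`z` in the cone over `N ⊆ {f < 0}` and `0 ≤ f (y + z)` is a nonnegative combination of `y`
and `f y • z - f z • y ∈ ker f`. -/
lemma hull_union_inf_dual_singleton_le {P N : Set V} {f : V →ₗ[𝕜] 𝕜}
    (hP : ∀ v ∈ P, 0 ≤ f v) (hN : ∀ v ∈ N, f v < 0) :
    hull 𝕜 (P ∪ N) ⊓ dual .id {f} ≤ hull 𝕜 (P ∪ Set.image2 (f.fourierMotzkin · ·) P N) := by
  rintro x ⟨hx, hfx⟩
  obtain ⟨y, hy, z, hz, rfl⟩ := Submodule.mem_sup.1 ((Submodule.span_union P N).le hx)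
  have hfy : 0 ≤ f y := by simpa using hull_le_dual_singleton hP hy
  have hfyz : 0 ≤ f y + f z := by simpa using hfx
  have hPle : hull 𝕜 P ≤ hull 𝕜 (P ∪ Set.image2 (f.fourierMotzkin · ·) P N) :=
    Submodule.span_mono Set.subset_union_left
  rcases hfy.eq_or_lt with hfy0 | hfy0
  · obtain rfl := eq_zero_of_mem_hull_of_forall_neg hN hz (by linarith)
    simpa using hPle hy
  · have hyz : y + z = (1 + f z / f y) • y + (f y)⁻¹ • f.fourierMotzkin y z := by
      rw [LinearMap.fourierMotzkin_apply]
      match_scalars <;> field_simp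
      ring
    rw [hyz]
    refine add_mem (smul_mem _ ?_ (hPle hy)) (smul_mem _ (by positivity) ?_)
    · rw [one_add_div hfy0.ne']; exact div_nonneg hfyz hfy0.le
    · exact Submodule.span_mono Set.subset_union_right (fourierMotzkin_mem_hull_image2 f hy hz)

lemma FG.inf_dual_singleton {C : PointedCone 𝕜 V} (hC : C.FG) (f : V →ₗ[𝕜] 𝕜) :
    (C ⊓ dual .id {f}).FG := by
  classical
  obtain ⟨s, rfl⟩ := hC
  set P := s.filter (0 ≤ f ·)
  set N := s.filter (¬ 0 ≤ f ·)
  have hP : ∀ v ∈ (P : Set V), 0 ≤ f v := fun v hv => (mem_filter.1 hv).2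
  have hN : ∀ v ∈ (N : Set V), f v < 0 := fun v hv => not_le.1 (mem_filter.1 hv).2
  refine ⟨P ∪ image₂ (f.fourierMotzkin · ·) P N, le_antisymm ?_ ?_⟩
  · refine Submodule.span_le.2 ?_
    push_cast
    rintro _ (hv | ⟨p, hp, q, hq, rfl⟩)
    · exact ⟨Submodule.subset_span (filter_subset _ s hv), by simpa using hP _ hv⟩
    · refine ⟨?_, by simp [mul_comm]⟩
      simp only [LinearMap.fourierMotzkin_apply, sub_eq_add_neg, ← neg_smul]
      exact add_mem (smul_mem _ (hP p hp) (Submodule.subset_span (filter_subset _ s hq)))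
        (smul_mem _ (neg_nonneg.2 (hN q hq).le) (Submodule.subset_span (filter_subset _ s hp)))
  · have hs : (s : Set V) = (P : Set V) ∪ N := by rw [← coe_union, filter_union_filter_not_eq]
    simp only [hs, coe_union, coe_image₂]
    exact hull_union_inf_dual_singleton_le hP hN

lemma mem_hull_union_neg_of_mem_span {s : Set V} {x : V} (hx : x ∈ Submodule.span 𝕜 s) :
    x ∈ hull 𝕜 (s ∪ -s) := by
  suffices x ∈ hull 𝕜 (s ∪ -s) ∧ -x ∈ hull 𝕜 (s ∪ -s) from this.1
  induction hx using Submodule.span_induction with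
  | mem v hv => exact ⟨subset_hull (.inl hv), subset_hull (.inr (by simpa using hv))⟩
  | zero => simp
  | add x y _ _ hx hy => exact ⟨add_mem hx.1 hy.1, by simpa [add_comm] using add_mem hx.2 hy.2⟩
  | smul c x _ hx =>
    rcases le_total 0 c with hc | hc
    · exact ⟨smul_mem _ hc hx.1, by simpa using smul_mem _ hc hx.2⟩
    · exact ⟨by simpa using smul_mem _ (neg_nonneg.2 hc) hx.2,
        by simpa using smul_mem _ (neg_nonneg.2 hc) hx.1⟩

lemma fg_top [FiniteDimensional 𝕜 V] : (⊤ : PointedCone 𝕜 V).FG := by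
  classical
  obtain ⟨S, hS⟩ := Module.Finite.fg_top (R := 𝕜) (M := V)
  refine ⟨S ∪ S.image Neg.neg, eq_top_iff.2 fun x _ => ?_⟩
  have hx : x ∈ Submodule.span 𝕜 (S : Set V) := hS ▸ Submodule.mem_top
  simpa [Set.image_neg_eq_neg] using mem_hull_union_neg_of_mem_span hx

lemma DualFG.fg [FiniteDimensional 𝕜 V] {C : PointedCone 𝕜 V} (hC : C.DualFG .id) : C.FG := by
  classical
  obtain ⟨s, rfl⟩ := hC
  induction s using Finset.induction_on with
  | empty => simpa using fg_top
  | insert f s _ ih => simpa [dual_insert, inf_comm] using FG.inf_dual_singleton ih f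

lemma mem_hull_range_iff {ι : Type*} [Fintype ι] {v : ι → V} {x : V} :
    x ∈ hull 𝕜 (Set.range v) ↔ ∃ c : ι → 𝕜, (∀ i, 0 ≤ c i) ∧ x = ∑ i, c i • v i := by
  rw [Submodule.mem_span_range_iff_exists_fun]
  constructor
  · rintro ⟨c, rfl⟩; exact ⟨fun i => c i, fun i => (c i).2, rfl⟩
  · rintro ⟨c, hc, rfl⟩; exact ⟨fun i => ⟨c i, hc i⟩, rfl⟩

end PointedCone

section SignPattern

variable {𝕜 V ι : Type*} [Field 𝕜] [LinearOrder 𝕜] [AddCommGroup V] [Module 𝕜 V] [Fintype ι]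

noncomputable def signPattern (φ : ι → Module.Dual 𝕜 V) (x : V) : Finset ι := {t | 0 < φ t x}

noncomputable def signPatterns (φ : ι → Module.Dual 𝕜 V) : Finset (Finset ι) :=
  (Set.range (signPattern φ)).toFinite.toFinset

lemma mem_signPatterns {φ : ι → Module.Dual 𝕜 V} {u : Finset ι} :
    u ∈ signPatterns φ ↔ ∃ x, signPattern φ x = u := by
  simp [signPatterns]

lemma signPattern_mem_signPatterns (φ : ι → Module.Dual 𝕜 V) (x : V) :
    signPattern φ x ∈ signPatterns φ :=
  mem_signPatterns.2 ⟨x, rfl⟩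

/-- A set `s` of more than `dim V` forms carries a linear relation `∑ g t • φ t = 0` with some
`g t > 0`; the pattern `{t ∈ s | 0 < g t}` is then not cut out by any `x`, since that would make
every term of `∑ g t * φ t x = 0` nonnegative and one of them positive. -/
lemma card_le_finrank_of_shatters_signPatterns [IsStrictOrderedRing 𝕜] [DecidableEq ι]
    [FiniteDimensional 𝕜 V] {φ : ι → Module.Dual 𝕜 V} {s : Finset ι}
    (hs : (signPatterns φ).Shatters s) : #s ≤ Module.finrank 𝕜 V := by
  by_contra! hcard
  have hdep : ¬ LinearIndepOn 𝕜 φ (s : Set ι) := fun h => by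
    have := h.fintype_card_le_finrank
    simp only [Subspace.dual_finrank_eq, Finset.coe_sort_coe, Fintype.card_coe] at this
    omega
  obtain ⟨g, hg, i, hi, hgi⟩ := not_linearIndepOn_finset_iff.1 hdep
  wlog hgi_pos : 0 < g i generalizing g
  · exact this (-g) (by simp [neg_smul, Finset.sum_neg_distrib, hg]) (neg_ne_zero.2 hgi)
      (neg_pos.2 (lt_of_le_of_ne (not_lt.1 hgi_pos) hgi))
  obtain ⟨u, hu, hsu⟩ := hs (s.filter_subset (0 < g ·))
  obtain ⟨x, rfl⟩ := mem_signPatterns.1 hu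
  have hsign : ∀ t ∈ s, (0 < φ t x ↔ 0 < g t) := fun t ht => by
    simpa [signPattern, ht] using congrArg (t ∈ ·) hsu
  have hterm : ∀ t ∈ s, 0 ≤ g t * φ t x := fun t ht => by
    rcases lt_or_ge 0 (g t) with h | h
    · exact (mul_pos h ((hsign t ht).2 h)).le
    · exact mul_nonneg_of_nonpos_of_nonpos h (not_lt.1 fun h' => h.not_gt ((hsign t ht).1 h'))
  have hsum : ∑ t ∈ s, g t * φ t x = 0 := by
    simpa using congrArg (· x) hg
  exact (Finset.sum_pos' hterm ⟨i, hi, mul_pos hgi_pos ((hsign i hi).2 hgi_pos)⟩).ne' hsum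

lemma card_signPatterns_le [IsStrictOrderedRing 𝕜] [DecidableEq ι] [FiniteDimensional 𝕜 V]
    (φ : ι → Module.Dual 𝕜 V) :
    #(signPatterns φ) ≤ ∑ j ∈ Iic (Module.finrank 𝕜 V), (Fintype.card ι).choose j :=
  calc #(signPatterns φ) ≤ #(signPatterns φ).shatterer := card_le_card_shatterer _
    _ ≤ ∑ j ∈ Iic (signPatterns φ).vcDim, (Fintype.card ι).choose j :=
      card_shatterer_le_sum_vcDim
    _ ≤ _ := sum_le_sum_of_subset (Iic_subset_Iic.2 <| Finset.sup_le fun _ hs =>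
      card_le_finrank_of_shatters_signPatterns (mem_shatterer.1 hs))

end SignPattern

lemma sum_choose_le_exp_mul_div_pow {k m : ℕ} (hkm : k ≤ m) :
    (∑ j ∈ Iic k, (m.choose j : ℝ)) ≤ (Real.exp 1 * m / k) ^ k := by
  rcases k.eq_zero_or_pos with rfl | hk
  · simp [Finset.Iic_eq_Icc]
  have hm : (0 : ℝ) < m := by exact_mod_cast hk.trans_le hkm
  set t : ℝ := k / m
  have ht : 0 < t := by positivity
  have ht1 : t ≤ 1 := div_le_one_of_le₀ (by exact_mod_cast hkm) hm.le
  have hlow :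
      (∑ j ∈ Iic k, (m.choose j : ℝ)) * t ^ k ≤ ∑ j ∈ Iic k, (m.choose j : ℝ) * t ^ j := by
    rw [sum_mul]
    exact sum_le_sum fun j hj =>
      mul_le_mul_of_nonneg_left (pow_le_pow_of_le_one ht.le ht1 (mem_Iic.1 hj)) (by positivity)
  have hbinom : ∑ j ∈ Iic k, (m.choose j : ℝ) * t ^ j ≤ (1 + t) ^ m := by
    rw [add_comm, add_pow]
    refine (sum_le_sum_of_subset_of_nonneg (fun j hj => ?_) fun _ _ _ => by positivity).trans_eq
      (sum_congr rfl fun _ _ => by ring)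
    simpa [Nat.lt_succ_iff] using (mem_Iic.1 hj).trans hkm
  have hexp : (1 + t) ^ m ≤ Real.exp 1 ^ k := by
    calc (1 + t) ^ m ≤ Real.exp t ^ m := by
          gcongr; linarith [Real.add_one_le_exp t]
      _ = Real.exp 1 ^ k := by
          rw [← Real.exp_nat_mul, ← Real.exp_nat_mul, mul_div_cancel₀ _ hm.ne', mul_one]
  calc (∑ j ∈ Iic k, (m.choose j : ℝ)) ≤ Real.exp 1 ^ k / t ^ k :=
        (le_div_iff₀ (by positivity)).2 (hlow.trans (hbinom.trans hexp))
    _ = (Real.exp 1 * m / k) ^ k := by rw [← div_pow, div_div_eq_mul_div]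

lemma Real.log_le_mul_sum_log_of_le_prod_pow {α : Type*} {s : Finset α} {c : α → ℝ} {N : ℝ}
    {k : ℕ} (hN : 0 < N) (hc : ∀ i ∈ s, 0 < c i) (h : N ≤ ∏ i ∈ s, c i ^ k) :
    Real.log N ≤ k * ∑ i ∈ s, Real.log (c i) :=
  calc Real.log N ≤ Real.log (∏ i ∈ s, c i ^ k) := Real.log_le_log hN h
    _ = k * ∑ i ∈ s, Real.log (c i) := by
      rw [Real.log_prod fun i hi => (pow_pos (hc i hi) k).ne', mul_sum]
      simp only [Real.log_pow]

section ConicLinearCover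

variable {𝕜 V W X : Type*} [Field 𝕜] [LinearOrder 𝕜] [IsStrictOrderedRing 𝕜]
  [AddCommGroup V] [Module 𝕜 V] [AddCommGroup W] [Module 𝕜 W] [AddCommGroup X] [Module 𝕜 X]

structure IsConicLinearCover (F : V → W) (𝒞 : Finset (PointedCone 𝕜 V × (V →ₗ[𝕜] W))) :
    Prop where
  dualFG : ∀ p ∈ 𝒞, p.1.DualFG .id
  covers : ∀ x, ∃ p ∈ 𝒞, x ∈ p.1
  eqOn : ∀ p ∈ 𝒞, ∀ x ∈ p.1, F x = p.2 x

lemma isConicLinearCover_linearMap (L : V →ₗ[𝕜] W) : IsConicLinearCover L {(⊤, L)} where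
  dualFG := by simp
  covers x := ⟨_, Finset.mem_singleton_self _, Submodule.mem_top⟩
  eqOn := by simp

lemma IsConicLinearCover.comp {F : V → W} {𝒞 : Finset (PointedCone 𝕜 V × (V →ₗ[𝕜] W))}
    (hF : IsConicLinearCover F 𝒞)
    {g : W → X} {B : ℕ}
    (hg : ∀ L : V →ₗ[𝕜] W, ∃ 𝒟 : Finset (PointedCone 𝕜 V × (V →ₗ[𝕜] X)),
      IsConicLinearCover (g ∘ L) 𝒟 ∧ #𝒟 ≤ B) :
    ∃ 𝒞' : Finset (PointedCone 𝕜 V × (V →ₗ[𝕜] X)),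
      IsConicLinearCover (g ∘ F) 𝒞' ∧ #𝒞' ≤ #𝒞 * B := by
  classical
  choose 𝒟 h𝒟 h𝒟card using hg
  refine ⟨𝒞.biUnion fun p => (𝒟 p.2).image fun q => (p.1 ⊓ q.1, q.2), ⟨?_, fun x => ?_, ?_⟩, ?_⟩
  · simp only [Finset.mem_biUnion, Finset.mem_image]
    rintro _ ⟨p, hp, q, hq, rfl⟩
    exact (hF.dualFG p hp).inf ((h𝒟 p.2).dualFG q hq)
  · obtain ⟨p, hp, hxp⟩ := hF.covers x
    obtain ⟨q, hq, hxq⟩ := (h𝒟 p.2).covers x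
    exact ⟨_, Finset.mem_biUnion.2 ⟨p, hp, Finset.mem_image_of_mem _ hq⟩, hxp, hxq⟩
  · simp only [Finset.mem_biUnion, Finset.mem_image]
    rintro _ ⟨p, hp, q, hq, rfl⟩ x ⟨hxp, hxq⟩
    simpa [hF.eqOn p hp x hxp] using (h𝒟 p.2).eqOn q hq x hxq
  · calc #(𝒞.biUnion _) ≤ ∑ p ∈ 𝒞, #((𝒟 p.2).image _) := Finset.card_biUnion_le
      _ ≤ ∑ _p ∈ 𝒞, B := Finset.sum_le_sum fun p _ => Finset.card_image_le.trans (h𝒟card p.2)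
      _ = #𝒞 * B := by rw [Finset.sum_const, smul_eq_mul]

lemma IsConicLinearCover.range_linearMap_comp {F : V → W}
    {𝒞 : Finset (PointedCone 𝕜 V × (V →ₗ[𝕜] W))} (hF : IsConicLinearCover F 𝒞) (A : W →ₗ[𝕜] X) :
    Set.range (A ∘ F) = ⋃ p : 𝒞, ((p.1.1.map (A ∘ₗ p.1.2) : PointedCone 𝕜 X) : Set X) := by
  ext y
  simp only [Set.mem_range, Function.comp_apply, Set.mem_iUnion, SetLike.mem_coe,
    PointedCone.mem_map, LinearMap.comp_apply, Subtype.exists, exists_prop]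
  constructor
  · rintro ⟨x, rfl⟩
    obtain ⟨p, hp, hx⟩ := hF.covers x
    exact ⟨p, hp, x, hx, by rw [hF.eqOn p hp x hx]⟩
  · rintro ⟨p, hp, x, hx, rfl⟩
    exact ⟨x, by rw [hF.eqOn p hp x hx]⟩

variable {ι : Type*} [Fintype ι]

/-- On the H-cone where `φ` has sign pattern `u`, the ReLU of `(φ t x)_t` is the linear map
keeping the coordinates in `u` and zeroing the others. -/
lemma exists_isConicLinearCover_relu (φ : ι → Module.Dual 𝕜 V) :
    ∃ 𝒟 : Finset (PointedCone 𝕜 V × (V →ₗ[𝕜] ι → 𝕜)),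
      IsConicLinearCover (fun x t => max (φ t x) 0) 𝒟 ∧ #𝒟 ≤ #(signPatterns φ) := by
  classical
  let piece (u : Finset ι) : PointedCone 𝕜 V × (V →ₗ[𝕜] ι → 𝕜) :=
    (PointedCone.dual .id (Set.range fun t => if t ∈ u then φ t else -φ t),
      LinearMap.pi fun t => if t ∈ u then φ t else 0)
  have mem_piece {u x} : x ∈ (piece u).1 ↔ ∀ t, 0 ≤ if t ∈ u then φ t x else -φ t x := by
    simp only [piece, PointedCone.mem_dual, Set.forall_mem_range]
    exact forall_congr' fun t => by split_ifs <;> rfl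
  refine ⟨(signPatterns φ).image piece, ⟨?_, fun x => ?_, ?_⟩, Finset.card_image_le⟩
  · simp only [Finset.mem_image]
    rintro _ ⟨u, -, rfl⟩
    exact ⟨Finset.univ.image fun t => if t ∈ u then φ t else -φ t, by simp [piece]⟩
  · refine ⟨_, Finset.mem_image_of_mem _ (signPattern_mem_signPatterns φ x), mem_piece.2 ?_⟩
    intro t
    by_cases ht : 0 < φ t x <;> simp [signPattern, ht, le_of_lt, not_lt.1]
  · simp only [Finset.mem_image]
    rintro _ ⟨u, -, rfl⟩ x hx
    ext t
    have := mem_piece.1 hx t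
    by_cases ht : t ∈ u <;> simp_all [piece]

lemma PointedCone.FG.isPolyhedralCone {n : ℕ} {C : PointedCone ℝ (Fin n → ℝ)} (hC : C.FG) :
    IsPolyhedralCone (C : Set (Fin n → ℝ)) := by
  obtain ⟨N, v, rfl⟩ := Submodule.fg_iff_exists_fin_generating_family.1 hC
  exact ⟨N, v, Set.ext fun _ => PointedCone.mem_hull_range_iff⟩

lemma exists_isConicLinearCover_hid (k : ℕ → ℕ)
    (W : ∀ i : ℕ, Matrix (Fin (k (i + 1))) (Fin (k i)) ℝ) :
    ∀ j, (∀ i ≤ j, k 0 ≤ k i) →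
      ∃ 𝒞 : Finset (PointedCone ℝ (Fin (k 0) → ℝ) × ((Fin (k 0) → ℝ) →ₗ[ℝ] Fin (k j) → ℝ)),
        IsConicLinearCover (hid k W j) 𝒞 ∧
          (#𝒞 : ℝ) ≤ ∏ ℓ ∈ range j, (Real.exp 1 * k (ℓ + 1) / k 0) ^ k 0
  | 0, _ => ⟨_, isConicLinearCover_linearMap LinearMap.id, by simp⟩
  | j + 1, hwidth => by
    obtain ⟨𝒞, h𝒞, hcard⟩ :=
      exists_isConicLinearCover_hid k W j fun i hi => hwidth i (by omega)
    obtain ⟨𝒞', h𝒞', hcard'⟩ := h𝒞.comp (g := fun y t => max ((W j).mulVec y t) 0)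
      (B := ∑ r ∈ Iic (k 0), (k (j + 1)).choose r) fun L => by
        obtain ⟨𝒟, h𝒟, h𝒟card⟩ :=
          exists_isConicLinearCover_relu fun t => LinearMap.proj t ∘ₗ (W j).mulVecLin ∘ₗ L
        refine ⟨𝒟, h𝒟, h𝒟card.trans ?_⟩
        simpa using card_signPatterns_le (fun t => LinearMap.proj t ∘ₗ (W j).mulVecLin ∘ₗ L)
    refine ⟨𝒞', h𝒞', ?_⟩
    calc (#𝒞' : ℝ) ≤ #𝒞 * ∑ r ∈ Iic (k 0), ((k (j + 1)).choose r : ℝ) := by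
          exact_mod_cast hcard'
      _ ≤ (∏ ℓ ∈ range j, (Real.exp 1 * k (ℓ + 1) / k 0) ^ k 0) *
          (Real.exp 1 * k (j + 1) / k 0) ^ k 0 :=
        mul_le_mul hcard (sum_choose_le_exp_mul_div_pow (hwidth _ le_rfl)) (by positivity)
          (by positivity)
      _ = _ := (prod_range_succ _ _).symm

/-- the range of a `(k, d, n)`-generative ReLU network (here with
depth `d+1`, input width `k 0`, hidden widths `k 1, …, k d` and output width
`n = k (d+1)`, each hidden width at least `k 0`) is a union of at most
`N = ∏_{ℓ=1}^{d} 2^{k}·(e·k_ℓ/k)^{k}` polyhedral cones, each contained in a linear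
subspace of dimension at most `k = k 0`; in particular
`log N ≤ k·∑_{i=1}^{d} log(2e·k_i/k)`. -/
theorem range_of_generative_network_is_union_of_cones
    (d : ℕ) (k : ℕ → ℕ) (W : ∀ i : ℕ, Matrix (Fin (k (i + 1))) (Fin (k i)) ℝ)
    (hk : 2 ≤ k 0) (hmono : ∀ i, i ≤ d + 1 → k 0 ≤ k i) :
    ∃ (N : ℕ) (S : Fin N → Set (Fin (k (d + 1)) → ℝ)),
      (N : ℝ) ≤ ∏ ℓ ∈ Finset.range d, (2 : ℝ) ^ (k 0) * (Real.exp 1 * (k (ℓ + 1)) / (k 0)) ^ (k 0) ∧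
      Real.log N ≤ (k 0) * ∑ i ∈ Finset.range d, Real.log (2 * Real.exp 1 * (k (i + 1)) / (k 0)) ∧
      {x | ∃ z, x = genNet k W d z} = ⋃ i, S i ∧
      (∀ i, IsPolyhedralCone (S i)) ∧
      (∀ i, ∃ E : Submodule ℝ (Fin (k (d + 1)) → ℝ), Module.finrank ℝ E ≤ k 0 ∧ S i ⊆ E) := by
  obtain ⟨𝒞, h𝒞, hcard⟩ := exists_isConicLinearCover_hid k W d fun i hi => hmono i (by omega)
  let piece (i : Fin #𝒞) := (𝒞.equivFin.symm i).1
  let A (i : Fin #𝒞) := (W d).mulVecLin ∘ₗ (piece i).2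
  have hbound : (#𝒞 : ℝ) ≤ ∏ ℓ ∈ range d, (2 * Real.exp 1 * k (ℓ + 1) / k 0) ^ k 0 :=
    hcard.trans <| prod_le_prod (fun _ _ => by positivity) fun _ _ => by
      gcongr; linarith [Real.exp_pos 1]
  refine ⟨#𝒞, fun i => (piece i).1.map (A i), hbound.trans_eq ?_, ?_, ?_, fun i => ?_,
    fun i => ?_⟩
  · exact prod_congr rfl fun _ _ => by rw [← mul_pow, mul_assoc, mul_div_assoc, mul_div_assoc]
  · obtain ⟨p, hp, -⟩ := h𝒞.covers 0
    refine Real.log_le_mul_sum_log_of_le_prod_pow (by exact_mod_cast card_pos.2 ⟨p, hp⟩)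
      (fun ℓ hℓ => ?_) hbound
    have : (0 : ℝ) < k (ℓ + 1) := by
      exact_mod_cast (by have := hmono (ℓ + 1) (by simp at hℓ; omega); omega : 0 < k (ℓ + 1))
    positivity
  · calc {x | ∃ z, x = genNet k W d z} = Set.range ((W d).mulVecLin ∘ hid k W d) := by
          ext; simp [genNet, eq_comm]
      _ = _ := h𝒞.range_linearMap_comp _
      _ = _ := (Equiv.iSup_comp 𝒞.equivFin.symm).symm
  · exact PointedCone.FG.isPolyhedralCone ((h𝒞.dualFG _ (𝒞.equivFin.symm i).2).fg.map _)
  · refine ⟨LinearMap.range (A i), (LinearMap.finrank_range_le _).trans (by simp), ?_⟩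
    rintro _ ⟨x, -, rfl⟩
    exact LinearMap.mem_range_self _ x
end ConicLinearCover
end

section
/- Let N, M be positive integers and let C_1, C_2, …, C_N ⊆ ℝ^M be convex cones such that their union C := ∪_{i=1}^N C_i is convex. Then there exists i ∈ [N] such that span(C) = span(C_i), where span denotes the linear hull. -/
/-!
A segment has infinitely many points, so if it is covered by finitely many subspaces, one of them
contains two distinct points of it and hence its whole line. Inducting on the number of subspaces,
a convex set covered by finitely many subspaces lies in one of them. Applied to `⋃ i, C i` and the
subspaces `span (C i)`, this gives `span (⋃ i, C i) ≤ span (C i)` for some `i`.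
-/

open Set AffineMap

section

variable {𝕜 E : Type*} [AddCommGroup E]

theorem Submodule.mem_of_lineMap_mem_of_ne [Field 𝕜] [Module 𝕜 E] (W : Submodule 𝕜 E)
    {x y : E} {s t : 𝕜} (hs : lineMap x y s ∈ W) (ht : lineMap x y t ∈ W) (hst : s ≠ t) :
    x ∈ W ∧ y ∈ W := by
  rw [lineMap_apply_module'] at hs ht
  have hdir : y - x ∈ W := by
    rw [← W.smul_mem_iff (sub_ne_zero.2 hst), sub_smul]
    simpa using W.sub_mem hs ht
  have hx : x ∈ W := by simpa using W.sub_mem hs (W.smul_mem s hdir)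
  exact ⟨hx, by simpa using W.add_mem hdir hx⟩

variable [Field 𝕜] [LinearOrder 𝕜] [IsStrictOrderedRing 𝕜] [Module 𝕜 E] {ι : Type*}

theorem Submodule.exists_mem_of_segment_subset_biUnion {s : Finset ι} {W : ι → Submodule 𝕜 E}
    {x y : E} (h : segment 𝕜 x y ⊆ ⋃ i ∈ s, (W i : Set E)) :
    ∃ i ∈ s, x ∈ W i ∧ y ∈ W i := by
  rw [segment_eq_image_lineMap, image_subset_iff, preimage_iUnion₂] at h
  obtain ⟨i, hi, hinf⟩ : ∃ i ∈ s, (lineMap x y ⁻¹' (W i : Set E) : Set 𝕜).Infinite := by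
    by_contra! hfin
    exact Icc_infinite zero_lt_one ((s.finite_toSet.biUnion hfin).subset h)
  obtain ⟨a, ha, b, hb, hab⟩ := hinf.nontrivial
  exact ⟨i, hi, (W i).mem_of_lineMap_mem_of_ne ha hb hab⟩

theorem Convex.exists_subset_submodule_of_subset_biUnion {S : Set E} (hS : Convex 𝕜 S)
    {s : Finset ι} (hs : s.Nonempty) (W : ι → Submodule 𝕜 E)
    (h : S ⊆ ⋃ i ∈ s, (W i : Set E)) : ∃ i ∈ s, S ⊆ W i := by
  induction hs using Finset.Nonempty.cons_induction with
  | singleton a => exact ⟨a, Finset.mem_singleton_self a, by simpa using h⟩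
  | cons a u ha hu ih =>
    by_cases hSu : S ⊆ ⋃ i ∈ u, (W i : Set E)
    · obtain ⟨i, hi, hSi⟩ := ih hSu
      exact ⟨i, Finset.mem_cons_of_mem hi, hSi⟩
    obtain ⟨x, hxS, hxu⟩ := not_subset.1 hSu
    refine ⟨a, Finset.mem_cons_self a u, fun y hyS => ?_⟩
    obtain ⟨i, hi, hxi, hyi⟩ :=
      Submodule.exists_mem_of_segment_subset_biUnion ((hS.segment_subset hxS hyS).trans h)
    rcases Finset.mem_cons.1 hi with rfl | hiu
    · exact hyi
    · exact absurd (mem_biUnion hiu hxi) hxu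

theorem Convex.exists_subset_submodule_of_subset_iUnion [Finite ι] [Nonempty ι] {S : Set E}
    (hS : Convex 𝕜 S) (W : ι → Submodule 𝕜 E) (h : S ⊆ ⋃ i, (W i : Set E)) :
    ∃ i, S ⊆ W i := by
  have := Fintype.ofFinite ι
  obtain ⟨i, -, hi⟩ := hS.exists_subset_submodule_of_subset_biUnion Finset.univ_nonempty W
    (by simpa using h)
  exact ⟨i, hi⟩

end

theorem span_of_convex_union_of_cones_general (N M : ℕ) (hN : 0 < N)
    (C : Fin N → Set (Fin M → ℝ))
    (hunion : Convex ℝ (⋃ i, C i)) :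
    ∃ i, Submodule.span ℝ (⋃ j, C j) = Submodule.span ℝ (C i) := by
  have : Nonempty (Fin N) := ⟨⟨0, hN⟩⟩
  obtain ⟨i, hi⟩ := hunion.exists_subset_submodule_of_subset_iUnion
    (fun i => Submodule.span ℝ (C i)) (iUnion_mono fun i => Submodule.subset_span)
  exact ⟨i, le_antisymm (Submodule.span_le.2 hi) (Submodule.span_mono (subset_iUnion C i))⟩

/-- if convex cones `C_1, …, C_N ⊆ ℝ^M` (convex sets closed under
multiplication by nonnegative scalars) have a convex union `C`, then the linear hull
of `C` equals the linear hull of one of the `C_i`. -/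
theorem span_of_convex_union_of_cones (N M : ℕ) (hN : 0 < N)
    (C : Fin N → Set (Fin M → ℝ))
    (hconv : ∀ i, Convex ℝ (C i))
    (hcone : ∀ i, ∀ c : ℝ, 0 ≤ c → ∀ x ∈ C i, c • x ∈ C i)
    (hunion : Convex ℝ (⋃ i, C i)) :
    ∃ i, Submodule.span ℝ (⋃ j, C j) = Submodule.span ℝ (C i) :=
  span_of_convex_union_of_cones_general N M hN C hunion
end

section
/- Let C ⊆ ℝ^n be a set admitting two finite decompositions into convex cones: C = ∪_{i=1}^N F_i = ∪_{j=1}^M D_j, where each F_i and each D_j is a convex cone. Then ∪_{i=1}^N span(F_i) = ∪_{j=1}^M span(D_j). In other words, the piecewise linear expansion Δ(C) := ∪_i span(C_i), defined from any finite decomposition C = ∪_i C_i into convex cones, is independent of the chosen decomposition. -/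
/-!
The span of a nonempty convex cone `K` is `K - K`, so it suffices to put every difference `a - b`
of points of a piece `F i` into some `span (D j)`. The segment `[a, b]` lies in `F i`, hence in
the finitely many `D j`; by pigeonhole two distinct points `b + s • (a - b)`, `b + t • (a - b)`
of it lie in the same `D j`, and their difference `(s - t) • (a - b)` puts `a - b` in
`span (D j)`.
-/

open Set Submodule Pointwise

theorem ConvexCone.coe_span_eq_sub {R E : Type*} [Ring R] [LinearOrder R] [IsOrderedRing R]
    [AddCommGroup E] [Module R E] (C : ConvexCone R E) (hC : (C : Set E).Nonempty) :
    (span R (C : Set E) : Set E) = (C : Set E) - C := by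
  obtain ⟨c, hc⟩ := hC
  refine Subset.antisymm (fun x hx => ?_) ?_
  · induction hx using span_induction with
    | mem x hx => exact ⟨x + c, C.add_mem hx hc, c, hc, add_sub_cancel_right x c⟩
    | zero => exact ⟨c, hc, c, hc, sub_self c⟩
    | add x y _ _ hx hy =>
      obtain ⟨a, ha, b, hb, rfl⟩ := hx
      obtain ⟨a', ha', b', hb', rfl⟩ := hy
      exact ⟨a + a', C.add_mem ha ha', b + b', C.add_mem hb hb', add_sub_add_comm ..⟩
    | smul r x _ hx =>
      obtain ⟨a, ha, b, hb, rfl⟩ := hx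
      rcases lt_trichotomy r 0 with hr | rfl | hr
      · exact ⟨(-r) • b, C.smul_mem (neg_pos.2 hr) hb,
          (-r) • a, C.smul_mem (neg_pos.2 hr) ha, by simp only [neg_smul, neg_sub_neg, smul_sub]⟩
      · exact ⟨c, hc, c, hc, by simp only [sub_self, zero_smul]⟩
      · exact ⟨r • a, C.smul_mem hr ha, r • b, C.smul_mem hr hb, (smul_sub r a b).symm⟩
  · rintro _ ⟨a, ha, b, hb, rfl⟩
    exact sub_mem (subset_span ha) (subset_span hb)

section Field

variable {𝕜 E : Type*} [Field 𝕜] [LinearOrder 𝕜] [IsStrictOrderedRing 𝕜]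
  [AddCommGroup E] [Module 𝕜 E]

theorem ConvexCone.coe_hull_eq_self_of_convex {s : Set E} (hs : Convex 𝕜 s)
    (hsmul : ∀ c : 𝕜, 0 < c → ∀ x ∈ s, c • x ∈ s) : (hull 𝕜 s : Set E) = s := by
  refine Subset.antisymm (fun x hx => ?_) subset_hull
  obtain ⟨c, hc, y, hy, rfl⟩ := (mem_hull_of_convex hs).1 hx
  exact hsmul c hc y hy

theorem exists_sub_mem_span_of_segment_subset_iUnion {ι : Type*} [Finite ι] {D : ι → Set E}
    {a b : E} (h : segment 𝕜 a b ⊆ ⋃ j, D j) : ∃ j, a - b ∈ span 𝕜 (D j) := by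
  have hmem (t : Icc (0 : 𝕜) 1) : ∃ j, b + (t : 𝕜) • (a - b) ∈ D j :=
    mem_iUnion.1 <| h <| by
      rw [segment_symm, segment_eq_image']
      exact mem_image_of_mem _ t.2
  choose j hj using hmem
  have := Icc.infinite (zero_lt_one' 𝕜)
  obtain ⟨s, t, hst, hjst⟩ := Finite.exists_ne_map_eq_of_infinite j
  have hdiff :
      (b + (s : 𝕜) • (a - b)) - (b + (t : 𝕜) • (a - b)) = ((s : 𝕜) - t) • (a - b) := by
    rw [add_sub_add_left_eq_sub, sub_smul]
  refine ⟨j s, (smul_mem_iff _ (sub_ne_zero.2 (Subtype.coe_injective.ne hst))).1 ?_⟩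
  rw [← hdiff]
  exact sub_mem (subset_span (hj s)) (hjst ▸ subset_span (hj t))

theorem ConvexCone.span_subset_iUnion_span {ι : Type*} [Finite ι] [Nonempty ι]
    (C : ConvexCone 𝕜 E) {D : ι → Set E} (hC : (C : Set E) ⊆ ⋃ j, D j) :
    (span 𝕜 (C : Set E) : Set E) ⊆ ⋃ j, (span 𝕜 (D j) : Set E) := by
  rcases (C : Set E).eq_empty_or_nonempty with hempty | hne
  · rw [hempty, span_empty, bot_coe, singleton_subset_iff]
    exact mem_iUnion.2 ⟨Classical.arbitrary ι, zero_mem _⟩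
  · rw [C.coe_span_eq_sub hne]
    rintro _ ⟨a, ha, b, hb, rfl⟩
    exact mem_iUnion.2 <| exists_sub_mem_span_of_segment_subset_iUnion <|
      (C.convex.segment_subset ha hb).trans hC

theorem iUnion_span_subset_iUnion_span_of_convex_cones {ι κ : Type*} [Finite κ] [Nonempty κ]
    {F : ι → Set E} {D : κ → Set E} (hconv : ∀ i, Convex 𝕜 (F i))
    (hsmul : ∀ i, ∀ c : 𝕜, 0 < c → ∀ x ∈ F i, c • x ∈ F i)
    (hFD : (⋃ i, F i) ⊆ ⋃ j, D j) :
    (⋃ i, (span 𝕜 (F i) : Set E)) ⊆ ⋃ j, (span 𝕜 (D j) : Set E) :=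
  iUnion_subset fun i => by
    have hcone := ConvexCone.coe_hull_eq_self_of_convex (hconv i) (hsmul i)
    simpa only [hcone] using (ConvexCone.hull 𝕜 (F i)).span_subset_iUnion_span
      (hcone.trans_subset <| (subset_iUnion F i).trans hFD)

end Field

/-- uniqueness of the piecewise linear expansion `Δ`.  If a set
`C ⊆ ℝ^n` admits two finite decompositions into convex cones (convex sets closed
under multiplication by nonnegative scalars), `C = ∪_{i=1}^N F_i = ∪_{j=1}^M D_j`,
then the unions of the linear hulls agree:
`∪_i span(F_i) = ∪_j span(D_j)`. -/
theorem piecewise_linear_expansion_well_defined (n N M : ℕ) (hN : 0 < N) (hM : 0 < M)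
    (F : Fin N → Set (Fin n → ℝ)) (D : Fin M → Set (Fin n → ℝ))
    (hFconv : ∀ i, Convex ℝ (F i))
    (hFcone : ∀ i, ∀ c : ℝ, 0 ≤ c → ∀ x ∈ F i, c • x ∈ F i)
    (hDconv : ∀ j, Convex ℝ (D j))
    (hDcone : ∀ j, ∀ c : ℝ, 0 ≤ c → ∀ x ∈ D j, c • x ∈ D j)
    (hFD : (⋃ i, F i) = ⋃ j, D j) :
    (⋃ i, (Submodule.span ℝ (F i) : Set (Fin n → ℝ)))
      = ⋃ j, (Submodule.span ℝ (D j) : Set (Fin n → ℝ)) := by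
  have := Fin.pos_iff_nonempty.1 hN
  have := Fin.pos_iff_nonempty.1 hM
  exact Subset.antisymm
    (iUnion_span_subset_iUnion_span_of_convex_cones hFconv (fun i c hc => hFcone i c hc.le) hFD.le)
    (iUnion_span_subset_iUnion_span_of_convex_cones hDconv (fun j c hc => hDcone j c hc.le) hFD.ge)
end

section
/- Let 0 < p < 1 and t > 1 satisfy t·p < 1, and define h_p(a) := (1−a)·log((1−a)/(1−p)) + a·log(a/p) for 0 < a < 1. Then h_p(t·p) ≥ p·( t·log t − t + 1 ). -/
namespace Real

lemma sub_le_mul_log_div {x y : ℝ} (hx : 0 ≤ x) (hy : 0 < y) : x - y ≤ x * log (x / y) := by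
  rcases hx.eq_or_lt with rfl | hx
  · simpa using hy.le
  calc x - y = x * (1 - (x / y)⁻¹) := by field_simp
    _ ≤ x * log (x / y) := by gcongr; exact one_sub_inv_le_log_of_pos (by positivity)

end Real

theorem kl_bernoulli_lower_bound_general (p t : ℝ) (hp0 : 0 < p) (hp1 : p < 1)
    (htp : t * p < 1) :
    p * (t * Real.log t - t + 1) ≤
      (1 - t * p) * Real.log ((1 - t * p) / (1 - p)) + (t * p) * Real.log ((t * p) / p) := by
  rw [mul_div_cancel_right₀ t hp0.ne']
  -- the `t * p * log t` terms cancel, leaving `(1 - t p) - (1 - p) ≤ (1 - t p) log ((1 - t p) / (1 - p))`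
  linear_combination Real.sub_le_mul_log_div (by linarith : 0 ≤ 1 - t * p) (by linarith : 0 < 1 - p)

/-- The Kullback–Leibler divergence `h_p(a)` between Bernoulli(a) and
Bernoulli(p), evaluated at `a = t·p`, is bounded below by `p·(t·log t − t + 1)`
whenever `0 < p < 1`, `t > 1` and `t·p < 1`. -/
theorem kl_bernoulli_lower_bound (p t : ℝ) (hp0 : 0 < p) (hp1 : p < 1)
    (ht : 1 < t) (htp : t * p < 1) :
    p * (t * Real.log t - t + 1) ≤
      (1 - t * p) * Real.log ((1 - t * p) / (1 - p)) + (t * p) * Real.log ((t * p) / p) :=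
  kl_bernoulli_lower_bound_general p t hp0 hp1 htp
end
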